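/- Let X be a random variable with a ≤ X ≤ b almost surely for real numbers a < b, and let X_1, …, X_m be i.i.d. copies of X with empirical mean X̄_m = (1/m) Σ_{i=1}^m X_i and empirical variance V̄_m = (1/m) Σ_{i=1}^m (X_i - X̄_m)². Then for any x > 0, P( V̄_m ≤ V[X] + sqrt( 2 V[X] (b-a)² x / m ) + x (b-a)² / (3m) ) ≥ 1 - exp(-x), where V[X] denotes the variance of X. -/

import Mathlib

/-!
Put `μ = E[X]` and `Y i = (X i - μ) ^ 2`. The empirical mean minimises the sum of squared
deviations, so the empirical variance is at most the average of the `Y i`, which are independent,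
take values in `[0, c]` with `c = (b - a) ^ 2`, and have mean `V[X]`. By convexity of `exp`,
`E[exp (t * Y)] ≤ exp (V[X] / c * (exp (t * c) - 1))`, and the series bound
`exp u ≤ 1 + u + u ^ 2 / (2 * (1 - u / 3))` for `0 ≤ u < 3` turns the Chernoff bound for the sum
into Bernstein's inequality, whose deviation term is exactly the one in the statement.
-/

open MeasureTheory ProbabilityTheory

/-- Empirical mean of the first `m` of the random variables `X i`. -/
noncomputable def empMean {Ω : Type*} (X : ℕ → Ω → ℝ) (m : ℕ) (ω : Ω) : ℝ :=
  (∑ i ∈ Finset.range m, X i ω) / m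

/-- Empirical variance of the first `m` of the random variables `X i`. -/
noncomputable def empVar {Ω : Type*} (X : ℕ → Ω → ℝ) (m : ℕ) (ω : Ω) : ℝ :=
  (∑ i ∈ Finset.range m, (X i ω - empMean X m ω) ^ 2) / m

open Real Finset
open scoped Nat

lemma exp_le_one_add_add_sq_div_of_lt_three {u : ℝ} (hu : 0 ≤ u) (hu3 : u < 3) :
    exp u ≤ 1 + u + u ^ 2 / (2 * (1 - u / 3)) := by
  have htail : HasSum (fun n ↦ u ^ (n + 2) / (n + 2)!) (exp u - (1 + u)) := by
    have h := (hasSum_nat_add_iff' 2).2 (exp_eq_exp_ℝ ▸ NormedSpace.expSeries_div_hasSum_exp u)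
    simpa [sum_range_succ] using h
  have hgeom : HasSum (fun n ↦ u ^ 2 / 2 * (u / 3) ^ n) (u ^ 2 / 2 * (1 - u / 3)⁻¹) :=
    (hasSum_geometric_of_lt_one (by positivity) (by linarith)).mul_left _
  have hterm (n : ℕ) : u ^ (n + 2) / (n + 2)! ≤ u ^ 2 / 2 * (u / 3) ^ n := by
    have hfact : (2 * 3 ^ n : ℝ) ≤ (n + 2)! := by
      exact_mod_cast add_comm 2 n ▸ (Nat.factorial_mul_pow_le_factorial : 2! * 3 ^ n ≤ (2 + n)!)
    calc u ^ (n + 2) / (n + 2)! ≤ u ^ (n + 2) / (2 * 3 ^ n) :=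
          div_le_div_of_nonneg_left (by positivity) (by positivity) hfact
      _ = u ^ 2 / 2 * (u / 3) ^ n := by rw [div_pow]; ring
  have h := hasSum_le hterm htail hgeom
  rw [← div_eq_mul_inv, div_div] at h
  linarith

lemma exists_bernstein_exponent {w c x : ℝ} (hw : 0 ≤ w) (hc : 0 < c) (hx : 0 ≤ x) :
    ∃ t, 0 ≤ t ∧ -t * (w + √(2 * w * c * x) + x * c / 3) + w / c * (exp (t * c) - 1) ≤ -x := by
  rcases hw.eq_or_lt with rfl | hw
  · refine ⟨3 / c, by positivity, le_of_eq ?_⟩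
    simp only [mul_zero, zero_mul, sqrt_zero, zero_add, zero_div]
    field_simp
    ring
  set β := √(2 * x / (w * c))
  have hβ : 0 ≤ β := sqrt_nonneg _
  have hβsq : w * c * β ^ 2 = 2 * x := by
    rw [sq_sqrt (by positivity)]; field_simp
  have hsqrt : √(2 * w * c * x) = w * c * β := by
    rw [← sqrt_sq (by positivity : 0 ≤ w * c * β)]
    congr 1
    linear_combination (-(w * c)) * hβsq
  set D := 1 + c * β / 3 with hDdef
  -- `β / D` maximises Bernstein's exponent
  -- `t * (√(2 * w * c * x) + x * c / 3) - w * c * t ^ 2 / (2 * (1 - t * c / 3))`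
  refine ⟨β / D, by positivity, ?_⟩
  have hu3 : β / D * c < 3 := by
    rw [div_mul_eq_mul_div, div_lt_iff₀ (by positivity)]; linarith [hDdef]
  have hexp := exp_le_one_add_add_sq_div_of_lt_three (by positivity) hu3
  have hD : 1 - β / D * c / 3 = 1 / D := by rw [hDdef]; field_simp; ring
  calc -(β / D) * (w + √(2 * w * c * x) + x * c / 3) + w / c * (exp (β / D * c) - 1)
      ≤ -(β / D) * (w + √(2 * w * c * x) + x * c / 3)
          + w / c * (β / D * c + (β / D * c) ^ 2 / (2 * (1 - β / D * c / 3))) := by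
        gcongr; linarith
    _ = -x := by
        rw [hD, hsqrt, hDdef, show x = w * c * β ^ 2 / 2 by linarith]
        field_simp
        ring

lemma sum_sq_sub_average_le {ι : Type*} (s : Finset ι) (f : ι → ℝ) (c : ℝ) :
    ∑ i ∈ s, (f i - (∑ j ∈ s, f j) / #s) ^ 2 ≤ ∑ i ∈ s, (f i - c) ^ 2 := by
  rcases s.eq_empty_or_nonempty with rfl | hs
  · simp
  set μ := (∑ j ∈ s, f j) / #s
  have hdev : ∑ i ∈ s, (f i - μ) = 0 := by
    rw [sum_sub_distrib, sum_const, nsmul_eq_mul, mul_div_cancel₀ _ (by positivity), sub_self]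
  calc ∑ i ∈ s, (f i - μ) ^ 2
      ≤ ∑ i ∈ s, (f i - μ) ^ 2 + 2 * (μ - c) * ∑ i ∈ s, (f i - μ) + #s * (μ - c) ^ 2 := by
        rw [hdev]; nlinarith [sq_nonneg (μ - c)]
    _ = ∑ i ∈ s, (f i - c) ^ 2 := by
        rw [mul_sum, ← sum_add_distrib, ← nsmul_eq_mul, ← sum_const, ← sum_add_distrib]
        exact sum_congr rfl fun i _ ↦ by ring

lemma empVar_le_sum_sq_sub_div {Ω : Type*} (X : ℕ → Ω → ℝ) (m : ℕ) (ω : Ω) (c : ℝ) :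
    empVar X m ω ≤ (∑ i ∈ range m, (X i ω - c) ^ 2) / m := by
  have h := sum_sq_sub_average_le (range m) (X · ω) c
  rw [card_range] at h
  exact div_le_div_of_nonneg_right h m.cast_nonneg

section Bernstein

variable {Ω : Type*} {mΩ : MeasurableSpace Ω} {P : Measure Ω} [IsProbabilityMeasure P]

lemma ofReal_one_sub_le_of_measureReal_compl_le {A : Set Ω} {r : ℝ} (h : P.real Aᶜ ≤ r) :
    ENNReal.ofReal (1 - r) ≤ P A := by
  refine ENNReal.ofReal_le_of_le_toReal ?_
  have h1 : P.real (A ∪ Aᶜ) ≤ P.real A + P.real Aᶜ := measureReal_union_le A Aᶜ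
  rw [Set.union_compl_self, probReal_univ] at h1
  rw [← measureReal_def]
  linarith

lemma mgf_le_exp_integral_div_mul_exp_sub_one {Y : Ω → ℝ} {c : ℝ} (hY : AEMeasurable Y P)
    (hc : 0 < c) (hbdd : ∀ᵐ ω ∂P, Y ω ∈ Set.Icc 0 c) (t : ℝ) :
    mgf Y P t ≤ exp ((∫ ω, Y ω ∂P) / c * (exp (t * c) - 1)) := by
  have hYint : Integrable Y P := .of_mem_Icc 0 c hY hbdd
  have hchord : ∀ᵐ ω ∂P, exp (t * Y ω) ≤ 1 + Y ω / c * (exp (t * c) - 1) := by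
    filter_upwards [hbdd] with ω ⟨h0, hc'⟩
    have hθ0 : 0 ≤ Y ω / c := div_nonneg h0 hc.le
    have hθ1 : Y ω / c ≤ 1 := (div_le_one hc).2 hc'
    have h := convexOn_exp.2 (Set.mem_univ 0) (Set.mem_univ (t * c)) (sub_nonneg.2 hθ1) hθ0
      (sub_add_cancel 1 _)
    simp only [smul_eq_mul, mul_zero, zero_add, exp_zero, mul_one] at h
    rw [show Y ω / c * (t * c) = t * Y ω by field_simp] at h
    linarith
  calc mgf Y P t ≤ ∫ ω, (1 + Y ω / c * (exp (t * c) - 1)) ∂P :=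
        integral_mono_ae (integrable_exp_mul_of_mem_Icc hY hbdd)
          ((integrable_const 1).add ((hYint.div_const c).mul_const _)) hchord
    _ = 1 + (∫ ω, Y ω ∂P) / c * (exp (t * c) - 1) := by
        rw [integral_add (integrable_const 1) ((hYint.div_const c).mul_const _), integral_const,
          integral_mul_const, integral_div]
        simp
    _ ≤ _ := by linarith [add_one_le_exp ((∫ ω, Y ω ∂P) / c * (exp (t * c) - 1))]

variable {ι : Type*} {Y : ι → Ω → ℝ} {c V : ℝ}

lemma measureReal_sum_ge_le_of_mem_Icc
    (hmeas : ∀ i, Measurable (Y i)) (hindep : iIndepFun Y P) (hc : 0 < c)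
    (hbdd : ∀ i, ∀ᵐ ω ∂P, Y i ω ∈ Set.Icc 0 c) (hmean : ∀ i, ∫ ω, Y i ω ∂P = V)
    (s : Finset ι) (ε : ℝ) {t : ℝ} (ht : 0 ≤ t) :
    P.real {ω | ε ≤ ∑ i ∈ s, Y i ω} ≤ exp (-t * ε + #s * V / c * (exp (t * c) - 1)) := by
  have hint := hindep.integrable_exp_mul_sum (t := t) (s := s) hmeas fun i _ ↦
    integrable_exp_mul_of_mem_Icc (hmeas i).aemeasurable (hbdd i)
  have hmgf : mgf (∑ i ∈ s, Y i) P t ≤ exp (#s * V / c * (exp (t * c) - 1)) := by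
    calc mgf (∑ i ∈ s, Y i) P t = ∏ i ∈ s, mgf (Y i) P t := hindep.mgf_sum hmeas s
      _ ≤ ∏ _i ∈ s, exp (V / c * (exp (t * c) - 1)) := prod_le_prod (fun _ _ ↦ mgf_nonneg)
          fun i _ ↦ hmean i ▸ mgf_le_exp_integral_div_mul_exp_sub_one (hmeas i).aemeasurable hc
            (hbdd i) t
      _ = exp (#s * V / c * (exp (t * c) - 1)) := by
          rw [prod_const, ← exp_nat_mul, mul_div_assoc, mul_assoc]
  calc P.real {ω | ε ≤ ∑ i ∈ s, Y i ω} ≤ exp (-t * ε) * mgf (∑ i ∈ s, Y i) P t := by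
        simpa only [Finset.sum_apply] using measure_ge_le_exp_mul_mgf ε ht hint
    _ ≤ exp (-t * ε) * exp (#s * V / c * (exp (t * c) - 1)) := by gcongr
    _ = _ := (exp_add _ _).symm

theorem measureReal_sum_ge_le_exp_neg_of_mem_Icc (hmeas : ∀ i, Measurable (Y i))
    (hindep : iIndepFun Y P) (hc : 0 < c) (hbdd : ∀ i, ∀ᵐ ω ∂P, Y i ω ∈ Set.Icc 0 c)
    (hmean : ∀ i, ∫ ω, Y i ω ∂P = V) (s : Finset ι) {x : ℝ} (hx : 0 ≤ x) :
    P.real {ω | #s * V + √(2 * (#s * V) * c * x) + x * c / 3 ≤ ∑ i ∈ s, Y i ω} ≤ exp (-x) := by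
  have hw : 0 ≤ #s * V := by
    rcases s.eq_empty_or_nonempty with rfl | ⟨i, -⟩
    · simp
    exact mul_nonneg (by positivity)
      (hmean i ▸ integral_nonneg_of_ae ((hbdd i).mono fun _ h ↦ h.1))
  obtain ⟨t, ht, hexp⟩ := exists_bernstein_exponent hw hc hx
  refine (measureReal_sum_ge_le_of_mem_Icc hmeas hindep hc hbdd hmean s _ ht).trans ?_
  exact exp_le_exp.2 hexp

theorem measureReal_average_ge_le_exp_neg_of_mem_Icc (hmeas : ∀ i, Measurable (Y i))
    (hindep : iIndepFun Y P) (hc : 0 < c) (hbdd : ∀ i, ∀ᵐ ω ∂P, Y i ω ∈ Set.Icc 0 c)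
    (hmean : ∀ i, ∫ ω, Y i ω ∂P = V) {s : Finset ι} (hs : s.Nonempty) {x : ℝ} (hx : 0 ≤ x) :
    P.real {ω | V + √(2 * V * c * x / #s) + x * c / (3 * #s) ≤ (∑ i ∈ s, Y i ω) / #s}
      ≤ exp (-x) := by
  have hn : (0 : ℝ) < #s := by exact_mod_cast hs.card_pos
  have hsqrt : √(2 * (#s * V) * c * x) = #s * √(2 * V * c * x / #s) := by
    rw [show 2 * (#s * V) * c * x = (#s : ℝ) ^ 2 * (2 * V * c * x / #s) by field_simp,
      sqrt_mul (sq_nonneg _), sqrt_sq hn.le]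
  refine (measureReal_mono fun ω hω ↦ ?_).trans (measureReal_sum_ge_le_exp_neg_of_mem_Icc
    hmeas hindep hc hbdd hmean s hx)
  have h := (le_div_iff₀ hn).1 hω
  simp only [Set.mem_ofPred_eq, hsqrt]
  refine Eq.trans_le ?_ h
  rw [add_mul, add_mul, div_mul_eq_mul_div, mul_div_mul_right _ _ hn.ne']
  ring

end Bernstein

/-- high-probability upper bound on the empirical variance in
terms of the true variance. -/
theorem stmt_11 {Ω : Type*} {mΩ : MeasurableSpace Ω} (P : Measure Ω)
    [IsProbabilityMeasure P] (a b : ℝ) (hab : a < b) (X : ℕ → Ω → ℝ)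
    (hmeas : ∀ i, Measurable (X i))
    (hindep : iIndepFun X P)
    (hident : ∀ i, IdentDistrib (X i) (X 0) P P)
    (hbdd : ∀ i, ∀ᵐ ω ∂P, X i ω ∈ Set.Icc a b)
    (m : ℕ) (hm : 1 ≤ m) (x : ℝ) (hx : 0 < x) :
    ENNReal.ofReal (1 - Real.exp (-x)) ≤
      P {ω | empVar X m ω ≤ variance (X 0) P
        + Real.sqrt (2 * variance (X 0) P * (b - a) ^ 2 * x / m)
        + x * (b - a) ^ 2 / (3 * m)} := by
  set μ := ∫ ω, X 0 ω ∂P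
  have hμ : μ ∈ Set.Icc a b := (convex_Icc a b).integral_mem isClosed_Icc (hbdd 0)
    (.of_mem_Icc a b (hmeas 0).aemeasurable (hbdd 0))
  have hsq : Measurable fun y : ℝ ↦ (y - μ) ^ 2 := by fun_prop
  have hdev (i : ℕ) : ∀ᵐ ω ∂P, (X i ω - μ) ^ 2 ∈ Set.Icc 0 ((b - a) ^ 2) :=
    (hbdd i).mono fun ω hω ↦
      ⟨sq_nonneg _, sq_le_sq' (by linarith [hω.1, hμ.2]) (by linarith [hω.2, hμ.1])⟩
  have hmean (i : ℕ) : ∫ ω, (X i ω - μ) ^ 2 ∂P = variance (X 0) P :=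
    ((hident i).comp hsq).integral_eq.trans (variance_eq_integral (hmeas 0).aemeasurable).symm
  have htail := measureReal_average_ge_le_exp_neg_of_mem_Icc (fun i ↦ hsq.comp (hmeas i))
    (hindep.comp _ fun _ ↦ hsq) (pow_pos (sub_pos.2 hab) 2) hdev hmean
    ⟨0, mem_range.2 hm⟩ hx.le
  rw [card_range] at htail
  refine ofReal_one_sub_le_of_measureReal_compl_le ((measureReal_mono fun ω hω ↦ ?_).trans htail)
  rw [Set.mem_compl_iff, Set.mem_ofPred_eq, not_le] at hω
  exact hω.le.trans (empVar_le_sum_sq_sub_div X m ω μ)
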